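/- For a bipartite pure state |ψ⟩ = Σᵢ |i⟩_A|wᵢ⟩_B with ⟨wᵢ|wᵢ⟩ = pᵢ, the trace-distance disturbance caused by the complete projective measurement Π_A in the basis {|i⟩} satisfies ½‖|ψ⟩⟨ψ| − Π_A[|ψ⟩⟨ψ|]‖₁ = c, where c ≥ 0 is the unique nonnegative solution of Σᵢ pᵢ/(c + pᵢ) = 1. -/

import Mathlib

open Matrix Kronecker BigOperators
open scoped ComplexOrder

/-- Trace norm (Schatten 1-norm): `Tr √(XᴴX)`. -/
noncomputable def traceNorm {m n : Type*} [Fintype m] [Fintype n] [DecidableEq n]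
    (X : Matrix m n ℂ) : ℝ :=
  (((Matrix.posSemidef_conjTranspose_mul_self X).1.eigenvectorUnitary.1 *
      Matrix.diagonal (((↑) : ℝ → ℂ) ∘ (√·) ∘ (Matrix.posSemidef_conjTranspose_mul_self X).1.eigenvalues) *
      (star (Matrix.posSemidef_conjTranspose_mul_self X).1.eigenvectorUnitary : Matrix n n ℂ)).trace).re


/-- Local complete projective measurement on subsystem `A` of a bipartite system, in the
local orthonormal basis `e`: `Π_A[τ] = Σᵢ (|eᵢ⟩⟨eᵢ| ⊗ 1) τ (|eᵢ⟩⟨eᵢ| ⊗ 1)`. -/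
noncomputable def projMeasA {dA dB : ℕ} (e : Fin dA → Fin dA → ℂ)
    (τ : Matrix (Fin dA × Fin dB) (Fin dA × Fin dB) ℂ) :
    Matrix (Fin dA × Fin dB) (Fin dA × Fin dB) ℂ :=
  ∑ i, (Matrix.vecMulVec (e i) (star (e i)) ⊗ₖ (1 : Matrix (Fin dB) (Fin dB) ℂ)) * τ *
       (Matrix.vecMulVec (e i) (star (e i)) ⊗ₖ (1 : Matrix (Fin dB) (Fin dB) ℂ))

/-!
Write `ψ = ∑ᵢ uᵢ` with `uᵢ = (|eᵢ⟩⟨eᵢ| ⊗ 1) ψ`: the `uᵢ` are pairwise orthogonal with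
`‖uᵢ‖² = pᵢ`, and the disturbance is `Δ = |ψ⟩⟨ψ| - ∑ᵢ |uᵢ⟩⟨uᵢ|`, a traceless Hermitian matrix.
The vector `x = ∑ᵢ (c + pᵢ)⁻¹ uᵢ` satisfies `Δ x = c x` precisely because `∑ᵢ pᵢ/(c + pᵢ) = 1`,
and by Cauchy–Schwarz `Δ ≤ c |x⟩⟨x| / ‖x‖²`. So `Δ₊ = c |x⟩⟨x| / ‖x‖²` and `Δ₋ = Δ₊ - Δ` are
positive with `Δ₊ Δ₋ = 0`, whence `‖Δ‖₁ = tr Δ₊ + tr Δ₋ = 2 tr Δ₊ - tr Δ = 2c`.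
-/

section TraceNorm

open scoped MatrixOrder

theorem traceNorm_eq_re_trace_sqrt {m n : Type*} [Fintype m] [Fintype n] [DecidableEq n]
    (X : Matrix m n ℂ) :
    traceNorm X = (CFC.sqrt (Xᴴ * X)).trace.re := by
  rw [CFC.sqrt_eq_real_sqrt _ (posSemidef_conjTranspose_mul_self X).nonneg,
    cfcₙ_eq_cfc (hf0 := Real.sqrt_zero), (posSemidef_conjTranspose_mul_self X).1.cfc_eq]
  rfl

/-- `(A - B)ᴴ (A - B) = (A + B)²`, so `|A - B| = A + B`. -/
theorem traceNorm_sub_of_mul_eq_zero {κ : Type*} [Fintype κ] [DecidableEq κ]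
    {A B : Matrix κ κ ℂ} (hA : A.PosSemidef) (hB : B.PosSemidef) (hAB : A * B = 0) :
    traceNorm (A - B) = (A.trace + B.trace).re := by
  have hBA : B * A = 0 := by
    simpa [hA.1.eq, hB.1.eq] using congrArg conjTranspose hAB
  have hsq : (A - B)ᴴ * (A - B) = (A + B) ^ 2 := by
    rw [conjTranspose_sub, hA.1.eq, hB.1.eq, sq]
    simp only [sub_mul, mul_sub, add_mul, mul_add, hAB, hBA]
    abel
  rw [traceNorm_eq_re_trace_sqrt, hsq, CFC.sqrt_sq (A + B) (hA.add hB).nonneg, trace_add]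

end TraceNorm

section SecularEquation

variable {ι : Type*} [Fintype ι] {p : ι → ℝ} {c : ℝ}

theorem add_sum_mul_sq_le_sq_mul_sq (x y : ℝ) (a b : ι → ℝ) :
    (x * y + ∑ i, a i * b i) ^ 2 ≤ (x ^ 2 + ∑ i, a i ^ 2) * (y ^ 2 + ∑ i, b i ^ 2) := by
  simpa [Fintype.sum_option] using Finset.sum_mul_sq_le_sq_mul_sq Finset.univ
    (fun o : Option ι => o.elim x a) (fun o => o.elim y b)

theorem sum_div_add_sq_pos (hp : ∀ i, 0 ≤ p i) (hc : ∑ i, p i / (c + p i) = 1) :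
    0 < ∑ i, p i / (c + p i) ^ 2 := by
  obtain ⟨i, -, hi⟩ := Finset.exists_ne_zero_of_sum_ne_zero (hc ▸ one_ne_zero)
  have hpi : p i ≠ 0 := fun h => hi (by simp [h])
  have hcpi : c + p i ≠ 0 := fun h => hi (by simp [h])
  exact Finset.sum_pos' (fun j _ => div_nonneg (hp j) (sq_nonneg _))
    ⟨i, Finset.mem_univ i, div_pos ((hp i).lt_of_ne' hpi) (pow_two_pos_of_ne_zero hcpi)⟩

theorem mul_sum_div_add_sq_add_sum_sq_eq_one (hc : ∑ i, p i / (c + p i) = 1) :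
    c * ∑ i, p i / (c + p i) ^ 2 + ∑ i, (p i / (c + p i)) ^ 2 = 1 := by
  rw [Finset.mul_sum, ← Finset.sum_add_distrib, ← hc]
  refine Finset.sum_congr rfl fun i _ => ?_
  rcases eq_or_ne (c + p i) 0 with h | h
  · simp [h]
  · field_simp

/-- With `N = ∑ pᵢ/(c+pᵢ)²` and `S = ∑ (c+pᵢ)⁻¹ zᵢ` we have `∑ zᵢ = c S + ∑ pᵢ/(c+pᵢ) zᵢ`; this is
Cauchy–Schwarz for `(√(cN), (pᵢ/(c+pᵢ))ᵢ)` and `(√(c/N) ‖S‖, (‖zᵢ‖)ᵢ)`, the first of which is a unit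
vector by the secular equation. -/
theorem norm_sum_sq_le_of_secular (hp : ∀ i, 0 ≤ p i) (hc0 : 0 ≤ c)
    (hc : ∑ i, p i / (c + p i) = 1) (z : ι → ℂ) (hz : ∀ i, p i = 0 → z i = 0) :
    ‖∑ i, z i‖ ^ 2 ≤
      c / (∑ i, p i / (c + p i) ^ 2) * ‖∑ i, (c + p i)⁻¹ • z i‖ ^ 2 + ∑ i, ‖z i‖ ^ 2 := by
  set N := ∑ i, p i / (c + p i) ^ 2
  set S := ∑ i, (c + p i)⁻¹ • z i
  have hN : 0 < N := sum_div_add_sq_pos hp hc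
  have hsplit : ∑ i, z i = c • S + ∑ i, (p i / (c + p i)) • z i := by
    rw [Finset.smul_sum, ← Finset.sum_add_distrib]
    refine Finset.sum_congr rfl fun i _ => ?_
    rcases eq_or_ne (c + p i) 0 with h | h
    · simp [hz i (by linarith [hp i])]
    · rw [smul_smul, ← add_smul, show c * (c + p i)⁻¹ + p i / (c + p i) = 1 by field_simp,
        one_smul]
  have htri : ‖∑ i, z i‖ ≤ c * ‖S‖ + ∑ i, p i / (c + p i) * ‖z i‖ := by
    rw [hsplit]
    refine (norm_add_le _ _).trans (add_le_add ?_ (norm_sum_le_of_le _ fun i _ => ?_))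
    · rw [norm_smul, Real.norm_of_nonneg hc0]
    · rw [norm_smul, Real.norm_of_nonneg (div_nonneg (hp i) (add_nonneg hc0 (hp i)))]
  have hsqrt : √(c * N) * √(c / N) = c := by
    rw [← Real.sqrt_mul (mul_nonneg hc0 hN.le), show c * N * (c / N) = c * c by field_simp,
      Real.sqrt_mul_self hc0]
  calc ‖∑ i, z i‖ ^ 2 ≤ (c * ‖S‖ + ∑ i, p i / (c + p i) * ‖z i‖) ^ 2 :=
        pow_le_pow_left₀ (norm_nonneg _) htri 2
    _ = (√(c * N) * (√(c / N) * ‖S‖) + ∑ i, p i / (c + p i) * ‖z i‖) ^ 2 := by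
        rw [← mul_assoc, hsqrt]
    _ ≤ (√(c * N) ^ 2 + ∑ i, (p i / (c + p i)) ^ 2) *
          ((√(c / N) * ‖S‖) ^ 2 + ∑ i, ‖z i‖ ^ 2) :=
        add_sum_mul_sq_le_sq_mul_sq _ _ _ _
    _ = c / N * ‖S‖ ^ 2 + ∑ i, ‖z i‖ ^ 2 := by
        rw [Real.sq_sqrt (mul_nonneg hc0 hN.le), mul_sum_div_add_sq_add_sum_sq_eq_one hc, one_mul,
          mul_pow, Real.sq_sqrt (div_nonneg hc0 hN.le)]

end SecularEquation

section OrthogonalFamily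

variable {ι κ : Type*} [Fintype κ]

theorem star_dotProduct_vecMulVec_self_star_mulVec (v y : κ → ℂ) :
    star y ⬝ᵥ (vecMulVec v (star v) *ᵥ y) = ((‖star v ⬝ᵥ y‖ ^ 2 : ℝ) : ℂ) := by
  rw [vecMulVec_mulVec, op_smul_eq_smul, dotProduct_smul, smul_eq_mul, star_dotProduct y v,
    Complex.star_def, Complex.mul_conj', Complex.ofReal_pow]

theorem mul_vecMulVec_self_star_mul {P : Matrix κ κ ℂ} (hP : P.IsHermitian) (ψ : κ → ℂ) :
    P * vecMulVec ψ (star ψ) * P = vecMulVec (P *ᵥ ψ) (star (P *ᵥ ψ)) := by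
  rw [mul_vecMulVec, vecMulVec_mul, star_mulVec, hP.eq]

theorem vecMulVec_self_star_mul_eq_zero {v : κ → ℂ} {M : Matrix κ κ ℂ} (hM : M.IsHermitian)
    (hv : M *ᵥ v = 0) : vecMulVec v (star v) * M = 0 := by
  rw [vecMulVec_mul, ← hM.eq, ← star_mulVec, hv, star_zero, vecMulVec_zero]

section OffDiagonalPart

variable [Fintype ι]

/-- `∑_{i ≠ j} |uᵢ⟩⟨uⱼ|`: the part of `|ψ⟩⟨ψ|`, `ψ = ∑ i, u i`, that the measurement destroys. -/
def offDiagonalPart (u : ι → κ → ℂ) : Matrix κ κ ℂ :=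
  vecMulVec (∑ i, u i) (star (∑ i, u i)) - ∑ i, vecMulVec (u i) (star (u i))

theorem isHermitian_offDiagonalPart (u : ι → κ → ℂ) : (offDiagonalPart u).IsHermitian :=
  (posSemidef_vecMulVec_self_star _).1.sub
    (posSemidef_sum _ fun i _ => posSemidef_vecMulVec_self_star (u i)).1

theorem offDiagonalPart_mulVec (u : ι → κ → ℂ) (v : κ → ℂ) :
    offDiagonalPart u *ᵥ v = ∑ i, (star (∑ j, u j) ⬝ᵥ v - star (u i) ⬝ᵥ v) • u i := by
  simp only [offDiagonalPart, sub_mulVec, sum_mulVec, vecMulVec_mulVec, op_smul_eq_smul,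
    sub_smul, Finset.sum_sub_distrib, ← Finset.smul_sum]

theorem star_dotProduct_offDiagonalPart_mulVec (u : ι → κ → ℂ) (y : κ → ℂ) :
    star y ⬝ᵥ (offDiagonalPart u *ᵥ y) =
      ((‖∑ i, star (u i) ⬝ᵥ y‖ ^ 2 - ∑ i, ‖star (u i) ⬝ᵥ y‖ ^ 2 : ℝ) : ℂ) := by
  simp only [offDiagonalPart, sub_mulVec, sum_mulVec, dotProduct_sub, dotProduct_sum,
    star_dotProduct_vecMulVec_self_star_mulVec]
  rw [star_sum, sum_dotProduct]
  push_cast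
  rfl

noncomputable def secularVector (u : ι → κ → ℂ) (p : ι → ℝ) (c : ℝ) : κ → ℂ :=
  ∑ i, (c + p i)⁻¹ • u i

/-- The positive part of `offDiagonalPart u`: `c` times the projection onto
`secularVector u p c`, whose squared norm is `∑ i, p i / (c + p i) ^ 2`. -/
noncomputable def offDiagonalPartPos (u : ι → κ → ℂ) (p : ι → ℝ) (c : ℝ) : Matrix κ κ ℂ :=
  (c / ∑ i, p i / (c + p i) ^ 2) • vecMulVec (secularVector u p c) (star (secularVector u p c))

theorem star_secularVector_dotProduct (u : ι → κ → ℂ) (p : ι → ℝ) (c : ℝ) (y : κ → ℂ) :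
    star (secularVector u p c) ⬝ᵥ y = ∑ i, (c + p i)⁻¹ • (star (u i) ⬝ᵥ y) := by
  simp only [secularVector, star_sum, star_smul, star_trivial, sum_dotProduct, smul_dotProduct]

end OffDiagonalPart

variable [DecidableEq ι]

def IsOrthogonalFamily (u : ι → κ → ℂ) (p : ι → ℝ) : Prop :=
  ∀ i j, star (u i) ⬝ᵥ u j = if i = j then (p i : ℂ) else 0

namespace IsOrthogonalFamily

variable {u : ι → κ → ℂ} {p : ι → ℝ}

theorem nonneg (hu : IsOrthogonalFamily u p) (i : ι) : 0 ≤ p i := by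
  have := dotProduct_star_self_nonneg (u i)
  rwa [hu, if_pos rfl, Complex.zero_le_real] at this

theorem eq_zero_of_eq_zero (hu : IsOrthogonalFamily u p) {i : ι} (hi : p i = 0) : u i = 0 :=
  dotProduct_star_self_eq_zero.mp (by rw [hu, if_pos rfl, hi, Complex.ofReal_zero])

variable [Fintype ι]

theorem star_dotProduct_sum_smul (hu : IsOrthogonalFamily u p) (a : ι → ℝ) (i : ι) :
    star (u i) ⬝ᵥ ∑ j, a j • u j = ((a i * p i : ℝ) : ℂ) := by
  simp [dotProduct_sum, dotProduct_smul, hu i, Complex.real_smul]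

theorem star_sum_dotProduct_sum_smul (hu : IsOrthogonalFamily u p) (a : ι → ℝ) :
    star (∑ i, u i) ⬝ᵥ ∑ j, a j • u j = ((∑ i, a i * p i : ℝ) : ℂ) := by
  simp [star_sum, sum_dotProduct, hu.star_dotProduct_sum_smul]

theorem trace_offDiagonalPart (hu : IsOrthogonalFamily u p) : (offDiagonalPart u).trace = 0 := by
  have h := hu.star_sum_dotProduct_sum_smul 1
  simp only [Pi.one_apply, one_smul, one_mul] at h
  simp only [offDiagonalPart, trace_sub, trace_sum, trace_vecMulVec]
  rw [dotProduct_comm, h]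
  simp [dotProduct_comm (u _), hu _ _]

variable {c : ℝ}

theorem star_secularVector_dotProduct_self (hu : IsOrthogonalFamily u p) :
    star (secularVector u p c) ⬝ᵥ secularVector u p c = ((∑ i, p i / (c + p i) ^ 2 : ℝ) : ℂ) := by
  rw [star_secularVector_dotProduct, Complex.ofReal_sum]
  refine Finset.sum_congr rfl fun i _ => ?_
  rw [secularVector, hu.star_dotProduct_sum_smul, Complex.real_smul, ← Complex.ofReal_mul,
    div_eq_mul_inv, ← inv_pow]
  congr 1
  ring

theorem offDiagonalPart_mulVec_secularVector (hu : IsOrthogonalFamily u p) (hc0 : 0 ≤ c)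
    (hc : ∑ i, p i / (c + p i) = 1) :
    offDiagonalPart u *ᵥ secularVector u p c = c • secularVector u p c := by
  have hc' : ∑ i, (c + p i)⁻¹ * p i = 1 := by simpa only [inv_mul_eq_div] using hc
  rw [offDiagonalPart_mulVec, secularVector, hu.star_sum_dotProduct_sum_smul, hc',
    Finset.smul_sum]
  refine Finset.sum_congr rfl fun i _ => ?_
  rw [hu.star_dotProduct_sum_smul, smul_smul]
  rcases eq_or_ne (c + p i) 0 with h | h
  · rw [hu.eq_zero_of_eq_zero (by linarith [hu.nonneg i]), smul_zero, smul_zero]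
  · rw [← Complex.ofReal_sub, show 1 - (c + p i)⁻¹ * p i = c * (c + p i)⁻¹ by field_simp; ring]
    exact Complex.coe_smul _ _

theorem posSemidef_offDiagonalPartPos (hu : IsOrthogonalFamily u p) (hc0 : 0 ≤ c) :
    (offDiagonalPartPos u p c).PosSemidef :=
  (posSemidef_vecMulVec_self_star _).smul <| div_nonneg hc0 <|
    Finset.sum_nonneg fun i _ => div_nonneg (hu.nonneg i) (sq_nonneg _)

theorem offDiagonalPartPos_mulVec_secularVector (hu : IsOrthogonalFamily u p)
    (hc : ∑ i, p i / (c + p i) = 1) :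
    offDiagonalPartPos u p c *ᵥ secularVector u p c = c • secularVector u p c := by
  rw [offDiagonalPartPos, smul_mulVec, vecMulVec_mulVec, op_smul_eq_smul,
    hu.star_secularVector_dotProduct_self, Complex.coe_smul, smul_smul,
    div_mul_cancel₀ _ (sum_div_add_sq_pos hu.nonneg hc).ne']

theorem trace_offDiagonalPartPos (hu : IsOrthogonalFamily u p) (hc : ∑ i, p i / (c + p i) = 1) :
    (offDiagonalPartPos u p c).trace = c := by
  rw [offDiagonalPartPos, trace_smul, trace_vecMulVec, dotProduct_comm,
    hu.star_secularVector_dotProduct_self, Complex.real_smul, ← Complex.ofReal_mul,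
    div_mul_cancel₀ _ (sum_div_add_sq_pos hu.nonneg hc).ne']

theorem posSemidef_offDiagonalPartPos_sub (hu : IsOrthogonalFamily u p) (hc0 : 0 ≤ c)
    (hc : ∑ i, p i / (c + p i) = 1) :
    (offDiagonalPartPos u p c - offDiagonalPart u).PosSemidef := by
  refine .of_dotProduct_mulVec_nonneg
    ((hu.posSemidef_offDiagonalPartPos hc0).1.sub (isHermitian_offDiagonalPart u)) fun y => ?_
  have hz : ∀ i, p i = 0 → star (u i) ⬝ᵥ y = 0 := fun i hi => by
    rw [hu.eq_zero_of_eq_zero hi, star_zero, zero_dotProduct]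
  rw [sub_mulVec, dotProduct_sub, star_dotProduct_offDiagonalPart_mulVec, offDiagonalPartPos,
    smul_mulVec, dotProduct_smul, star_dotProduct_vecMulVec_self_star_mulVec,
    star_secularVector_dotProduct, Complex.real_smul, ← Complex.ofReal_mul, ← Complex.ofReal_sub,
    Complex.zero_le_real, sub_nonneg]
  linarith [norm_sum_sq_le_of_secular hu.nonneg hc0 hc _ hz]

theorem offDiagonalPartPos_mul_sub_eq_zero (hu : IsOrthogonalFamily u p) (hc0 : 0 ≤ c)
    (hc : ∑ i, p i / (c + p i) = 1) :
    offDiagonalPartPos u p c * (offDiagonalPartPos u p c - offDiagonalPart u) = 0 := by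
  rw [offDiagonalPartPos, smul_mul_assoc, ← offDiagonalPartPos,
    vecMulVec_self_star_mul_eq_zero (hu.posSemidef_offDiagonalPartPos_sub hc0 hc).1, smul_zero]
  rw [sub_mulVec, hu.offDiagonalPartPos_mulVec_secularVector hc,
    hu.offDiagonalPart_mulVec_secularVector hc0 hc, sub_self]

theorem traceNorm_offDiagonalPart [DecidableEq κ] (hu : IsOrthogonalFamily u p) (hc0 : 0 ≤ c)
    (hc : ∑ i, p i / (c + p i) = 1) : traceNorm (offDiagonalPart u) = 2 * c := by
  have h := traceNorm_sub_of_mul_eq_zero (hu.posSemidef_offDiagonalPartPos hc0)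
    (hu.posSemidef_offDiagonalPartPos_sub hc0 hc) (hu.offDiagonalPartPos_mul_sub_eq_zero hc0 hc)
  rw [sub_sub_cancel] at h
  rw [h, trace_sub, hu.trace_offDiagonalPart, hu.trace_offDiagonalPartPos hc]
  simp only [sub_zero, Complex.add_re, Complex.ofReal_re]
  ring

end IsOrthogonalFamily

end OrthogonalFamily

section Pinching

variable {ι κ : Type*} [Fintype κ] [DecidableEq ι]

theorem isOrthogonalFamily_mulVec {P : ι → Matrix κ κ ℂ} (hP : ∀ i, (P i).IsHermitian)
    (hPP : ∀ i j, P i * P j = if i = j then P i else 0) {ψ : κ → ℂ} {p : ι → ℝ}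
    (hp : ∀ i, (p i : ℂ) = star ψ ⬝ᵥ (P i *ᵥ ψ)) :
    IsOrthogonalFamily (fun i => P i *ᵥ ψ) p := by
  intro i j
  rw [star_mulVec, (hP i).eq, ← dotProduct_mulVec, mulVec_mulVec, hPP]
  split_ifs with h
  · rw [h, hp]
  · rw [zero_mulVec, dotProduct_zero]

variable [Fintype ι]

def pinching (P : ι → Matrix κ κ ℂ) (ρ : Matrix κ κ ℂ) : Matrix κ κ ℂ :=
  ∑ i, P i * ρ * P i

theorem traceNorm_vecMulVec_sub_pinching [DecidableEq κ] {P : ι → Matrix κ κ ℂ}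
    (hP : ∀ i, (P i).IsHermitian) (hPP : ∀ i j, P i * P j = if i = j then P i else 0)
    (hP1 : ∑ i, P i = 1) {ψ : κ → ℂ} {p : ι → ℝ} (hp : ∀ i, (p i : ℂ) = star ψ ⬝ᵥ (P i *ᵥ ψ))
    {c : ℝ} (hc0 : 0 ≤ c) (hc : ∑ i, p i / (c + p i) = 1) :
    traceNorm (vecMulVec ψ (star ψ) - pinching P (vecMulVec ψ (star ψ))) = 2 * c := by
  have hψ : ∑ i, P i *ᵥ ψ = ψ := by rw [← sum_mulVec, hP1, one_mulVec]
  have h := (isOrthogonalFamily_mulVec hP hPP hp).traceNorm_offDiagonalPart hc0 hc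
  rwa [offDiagonalPart, hψ, ← Finset.sum_congr rfl fun i _ => mul_vecMulVec_self_star_mul (hP i) ψ]
    at h

end Pinching

section LocalMeasurement

variable {α β : Type*} [DecidableEq β]

theorem sum_kronecker {ι l m n o R : Type*} [NonUnitalNonAssocSemiring R] (s : Finset ι)
    (A : ι → Matrix l m R) (B : Matrix n o R) :
    ∑ i ∈ s, A i ⊗ₖ B = (∑ i ∈ s, A i) ⊗ₖ B := by
  ext ⟨a, b⟩ ⟨a', b'⟩
  simp [Matrix.sum_apply, Finset.sum_mul]

theorem isHermitian_vecMulVec_self_star_kronecker_one (a : α → ℂ) :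
    (vecMulVec a (star a) ⊗ₖ (1 : Matrix β β ℂ)).IsHermitian := by
  rw [IsHermitian, conjTranspose_kronecker, conjTranspose_vecMulVec, star_star, conjTranspose_one]

theorem star_dotProduct_vecMulVec_self_star_kronecker_one_mulVec [Fintype α] [Fintype β]
    (ψ : α × β → ℂ) (a : α → ℂ) :
    star ψ ⬝ᵥ ((vecMulVec a (star a) ⊗ₖ (1 : Matrix β β ℂ)) *ᵥ ψ) =
      star a ⬝ᵥ ((of fun x y : α => ∑ k, ψ (x, k) * star (ψ (y, k))) *ᵥ a) := by
  simp only [dotProduct, Pi.star_apply, RCLike.star_def, mulVec, kroneckerMap_apply,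
    vecMulVec_apply, one_apply, mul_ite, mul_one, mul_zero, ite_mul, zero_mul,
    Fintype.sum_prod_type, Finset.sum_ite_eq, Finset.mem_univ, ↓reduceIte, Finset.mul_sum,
    of_apply, Finset.sum_mul]
  conv_lhs => enter [2, x]; rw [Finset.sum_comm]
  conv_rhs => rw [Finset.sum_comm]
  refine Finset.sum_congr rfl fun x _ => Finset.sum_congr rfl fun y _ =>
    Finset.sum_congr rfl fun k _ => ?_
  ring

variable [DecidableEq α] {e : α → α → ℂ}

theorem vecMulVec_kronecker_one_mul [Fintype α] [Fintype β]
    (he : ∀ i j, star (e i) ⬝ᵥ e j = if i = j then 1 else 0) (i j : α) :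
    (vecMulVec (e i) (star (e i)) ⊗ₖ (1 : Matrix β β ℂ)) *
        (vecMulVec (e j) (star (e j)) ⊗ₖ (1 : Matrix β β ℂ)) =
      if i = j then vecMulVec (e i) (star (e i)) ⊗ₖ 1 else 0 := by
  rw [← mul_kronecker_mul, mul_one, vecMulVec_mul_vecMulVec, he]
  split_ifs with h
  · rw [one_smul, h]
  · rw [zero_smul, vecMulVec_zero, zero_kronecker]

theorem sum_vecMulVec_self_star_eq_one [Fintype α]
    (he : ∀ i j, star (e i) ⬝ᵥ e j = if i = j then 1 else 0) :
    ∑ i, vecMulVec (e i) (star (e i)) = 1 := by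
  set E : Matrix α α ℂ := of fun a i => e i a
  have hE : Eᴴ * E = 1 := by
    ext i j
    simpa [E, mul_apply, one_apply, dotProduct] using he i j
  calc ∑ i, vecMulVec (e i) (star (e i)) = E * Eᴴ := by
        ext a b
        simp [E, mul_apply, vecMulVec_apply, Matrix.sum_apply]
    _ = 1 := mul_eq_one_comm.mp hE

theorem projMeasA_eq_pinching {dA dB : ℕ} (e : Fin dA → Fin dA → ℂ)
    (τ : Matrix (Fin dA × Fin dB) (Fin dA × Fin dB) ℂ) :
    projMeasA e τ = pinching (fun i => vecMulVec (e i) (star (e i)) ⊗ₖ 1) τ :=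
  rfl

end LocalMeasurement

theorem disturbance_pure_bipartite_general {dA dB : ℕ}
    (ψ : Fin dA × Fin dB → ℂ)
    (e : Fin dA → Fin dA → ℂ)
    (he : ∀ i j, star (e i) ⬝ᵥ e j = if i = j then 1 else 0)
    (p : Fin dA → ℝ)
    (hp : ∀ i, (p i : ℂ) =
      star (e i) ⬝ᵥ ((Matrix.of fun a b : Fin dA => ∑ k, ψ (a, k) * star (ψ (b, k))) *ᵥ e i))
    (c : ℝ) (hc0 : 0 ≤ c) (hc : ∑ i, p i / (c + p i) = 1) :
    (1 / 2) * traceNorm (Matrix.vecMulVec ψ (star ψ) - projMeasA e (Matrix.vecMulVec ψ (star ψ)))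
      = c := by
  have hcomplete : ∑ i, vecMulVec (e i) (star (e i)) ⊗ₖ (1 : Matrix (Fin dB) (Fin dB) ℂ) = 1 := by
    rw [sum_kronecker, sum_vecMulVec_self_star_eq_one he, one_kronecker_one]
  have hp' : ∀ i, (p i : ℂ) =
      star ψ ⬝ᵥ ((vecMulVec (e i) (star (e i)) ⊗ₖ (1 : Matrix (Fin dB) (Fin dB) ℂ)) *ᵥ ψ) :=
    fun i => (hp i).trans (star_dotProduct_vecMulVec_self_star_kronecker_one_mulVec ψ (e i)).symm
  rw [projMeasA_eq_pinching, traceNorm_vecMulVec_sub_pinching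
    (fun i => isHermitian_vecMulVec_self_star_kronecker_one (e i))
    (vecMulVec_kronecker_one_mul he) hcomplete hp' hc0 hc]
  ring

/-- for a bipartite pure state `|ψ⟩`, the trace-distance disturbance caused by
the complete projective measurement on `A` in the orthonormal basis `{|eᵢ⟩}` equals the
unique nonnegative solution `c` of `Σᵢ pᵢ/(c + pᵢ) = 1`, where `pᵢ = ⟨eᵢ|Tr_B(|ψ⟩⟨ψ|)|eᵢ⟩`. -/
theorem disturbance_pure_bipartite {dA dB : ℕ}
    (ψ : Fin dA × Fin dB → ℂ) (hψ : ∑ x, ‖ψ x‖^2 = 1)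
    (e : Fin dA → Fin dA → ℂ)
    (he : ∀ i j, star (e i) ⬝ᵥ e j = if i = j then 1 else 0)
    (p : Fin dA → ℝ)
    (hp : ∀ i, (p i : ℂ) =
      star (e i) ⬝ᵥ ((Matrix.of fun a b : Fin dA => ∑ k, ψ (a, k) * star (ψ (b, k))) *ᵥ e i))
    (c : ℝ) (hc0 : 0 ≤ c) (hc : ∑ i, p i / (c + p i) = 1) :
    (1 / 2) * traceNorm (Matrix.vecMulVec ψ (star ψ) - projMeasA e (Matrix.vecMulVec ψ (star ψ)))
      = c :=
  disturbance_pure_bipartite_general ψ e he p hp c hc0 hc
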